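/- Let q be a real number with 0 < q < 1 and let w > 0 and w₁ > 0 be real. Then for every integer n ≥ 1, the Barnes-type Changhee q-zeta function interpolates the Barnes-type Changhee q-Bernoulli polynomials at non-positive integers: ζ_q(1−n, w | w₁) = −β_n(w:q|w₁)/n. -/

import Mathlib

open Finset

/-- The q-analogue `[z]_q = (1 - q^z)/(1 - q)` for a real exponent `z`. -/
noncomputable def qn (q z : ℝ) : ℝ := (1 - q ^ z) / (1 - q)

/-- The complex power `r^s := exp(s·log r)` of a positive real `r` (real logarithm). -/
noncomputable def rpowC (r : ℝ) (s : ℂ) : ℂ := Complex.exp (s * (Real.log r : ℂ))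

/-- The Barnes-type Changhee q-Bernoulli polynomial `β_n(w:q|w₁)`:
`β_0(w:q|w₁) = (q-1)/log q` and, for `n ≥ 1`,
`β_n(w:q|w₁) = ((q-1)/log q)·(1-q)^{-n} - n·w₁·Σ_{m≥0} q^{w₁m+w}·[w₁m+w]_q^{n-1}`. -/
noncomputable def qBw (q w w1 : ℝ) : ℕ → ℝ
  | 0 => (q - 1) / Real.log q
  | n + 1 => (q - 1) / Real.log q * ((1 - q) ^ (n + 1))⁻¹
      - ((n : ℝ) + 1) * w1 * ∑' m : ℕ, q ^ (w1 * (m : ℝ) + w) * qn q (w1 * (m : ℝ) + w) ^ n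

/-- The Barnes-type Changhee q-zeta function
`ζ_q(s,w|w₁) = -(1-q)^s/((s-1)·log q) + w₁·Σ_{m≥0} q^{w₁m+w}/[w₁m+w]_q^s`. -/
noncomputable def zetaQw (q w w1 : ℝ) (s : ℂ) : ℂ :=
  -(rpowC (1 - q) s) / ((s - 1) * (Real.log q : ℂ))
    + (w1 : ℂ) * ∑' m : ℕ, ((q ^ (w1 * (m : ℝ) + w) : ℝ) : ℂ)
        / rpowC (qn q (w1 * (m : ℝ) + w)) s

/-! At `s = 1 - n` the power `[x]_q^{-s}` is the ordinary power `[x]_q^{n-1}`, because every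
`[w₁m+w]_q` is positive; so the series of `ζ_q` is termwise the series in `β_n`, and the two
leading terms agree after clearing denominators. -/

lemma qn_pos {q z : ℝ} (hq0 : 0 < q) (hq1 : q < 1) (hz : 0 < z) : 0 < qn q z :=
  div_pos (by linarith [Real.rpow_lt_one hq0.le hq1 hz]) (by linarith)

lemma rpowC_neg_natCast {r : ℝ} (hr : 0 < r) (k : ℕ) :
    rpowC r (-(k : ℂ)) = ((r : ℂ) ^ k)⁻¹ := by
  rw [rpowC, neg_mul, Complex.exp_neg, Complex.exp_nat_mul, ← Complex.ofReal_exp,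
    Real.exp_log hr]

lemma zetaQw_neg_natCast {q w w1 : ℝ} (hq0 : 0 < q) (hq1 : q < 1) (hw : 0 < w) (hw1 : 0 < w1)
    (k : ℕ) :
    zetaQw q w w1 (-(k : ℂ)) = ((((1 - q) ^ k)⁻¹ / ((k + 1) * Real.log q)
      + w1 * ∑' m : ℕ, q ^ (w1 * (m : ℝ) + w) * qn q (w1 * (m : ℝ) + w) ^ k : ℝ) : ℂ) := by
  have hseries : ∑' m : ℕ, ((q ^ (w1 * (m : ℝ) + w) : ℝ) : ℂ)
        / rpowC (qn q (w1 * (m : ℝ) + w)) (-(k : ℂ))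
      = ((∑' m : ℕ, q ^ (w1 * (m : ℝ) + w) * qn q (w1 * (m : ℝ) + w) ^ k : ℝ) : ℂ) := by
    rw [Complex.ofReal_tsum]
    refine tsum_congr fun m => ?_
    rw [rpowC_neg_natCast (qn_pos hq0 hq1 (by positivity)), div_inv_eq_mul]
    push_cast
    rfl
  rw [zetaQw, hseries, rpowC_neg_natCast (by linarith : 0 < 1 - q),
    show -(k : ℂ) - 1 = -((k : ℂ) + 1) by ring, neg_mul, div_neg, neg_div, neg_neg]
  push_cast
  ring

lemma neg_qBw_succ_div {q : ℝ} (hq1 : q ≠ 1) (w w1 : ℝ) (k : ℕ) :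
    -qBw q w w1 (k + 1) / (k + 1) = ((1 - q) ^ k)⁻¹ / ((k + 1) * Real.log q)
      + w1 * ∑' m : ℕ, q ^ (w1 * (m : ℝ) + w) * qn q (w1 * (m : ℝ) + w) ^ k := by
  have h1q : 1 - q ≠ 0 := sub_ne_zero.mpr hq1.symm
  rw [qBw, pow_succ]
  field_simp
  ring

/-- The Barnes-type Changhee q-zeta function interpolates the Barnes-type Changhee
q-Bernoulli polynomials at non-positive integers: `ζ_q(1-n, w | w₁) = -β_n(w:q|w₁)/n`. -/
theorem zetaQw_neg_int (q w w1 : ℝ) (hq0 : 0 < q) (hq1 : q < 1)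
    (hw : 0 < w) (hw1 : 0 < w1) (n : ℕ) (hn : 1 ≤ n) :
    zetaQw q w w1 (1 - (n : ℂ)) = -((qBw q w w1 n : ℝ) : ℂ) / (n : ℂ) := by
  obtain ⟨k, rfl⟩ := Nat.exists_eq_add_of_le' hn
  have hs : 1 - ((k + 1 : ℕ) : ℂ) = -(k : ℂ) := by push_cast; ring
  rw [hs, zetaQw_neg_natCast hq0 hq1 hw hw1, ← neg_qBw_succ_div hq1.ne]
  push_cast
  rfl
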